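/- arXiv:2010.01259 — 4 statements merged into one kernel-verified Lean document; each statement's English description precedes it below -/
import Mathlib

section
/- Let H be a real Hilbert space and let A, B be self-adjoint, positive, invertible bounded linear operators on H. Then for every x ∈ H, the real number (1/2)⟨(A⁻¹ + B⁻¹)⁻¹ x, x⟩ is the greatest lower bound of the set { (1/2)⟨Az, z⟩ + (1/2)⟨B(x − z), x − z⟩ : z ∈ H }; that is, the inf-convolution Q_A □ Q_B equals Q_{A//B}, where A//B = (A⁻¹ + B⁻¹)⁻¹ is the parallel sum of A and B. -/
/-!
The infimum is attained: with `y = (A⁻¹ + B⁻¹)⁻¹ x`, the point `z₀ = A⁻¹ y` splits `x` as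
`z₀ + B⁻¹ y`, and since `A z₀ = B (x - z₀) = y`, expanding both quadratic forms around this split
makes the linear terms cancel: the value at `z₀ + d` is `½⟪y, x⟫ + ½⟪A d, d⟫ + ½⟪B d, d⟫`.
That `A⁻¹ + B⁻¹` is invertible at all follows from coercivity of `A⁻¹`, a consequence of
Cauchy–Schwarz for the semi-inner product `⟪A ·, ·⟫`.
-/

open scoped RealInnerProductSpace

namespace ContinuousLinearMap

variable {H : Type*} [NormedAddCommGroup H] [InnerProductSpace ℝ H] {A B : H →L[ℝ] H}

theorem apply_ringInverse_apply (hA : IsUnit A) (x : H) : A (Ring.inverse A x) = x := by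
  rw [← mul_apply_eq_comp, Ring.mul_inverse_cancel A hA, one_apply_eq_self]

theorem _root_.LinearMap.IsSymmetric.inner_map_add_add_self {T : H →ₗ[ℝ] H} (hT : T.IsSymmetric)
    (u d : H) : ⟪T (u + d), u + d⟫ = ⟪T u, u⟫ + 2 * ⟪T u, d⟫ + ⟪T d, d⟫ := by
  rw [map_add, inner_add_left, inner_add_right, inner_add_right, hT d u, real_inner_comm (T u) d]
  ring

/-- Cauchy–Schwarz for the semi-inner product `⟪A ·, ·⟫`, applied to `v` and `A v`. -/
theorem IsPositive.norm_apply_sq_le (hA : A.IsPositive) (v : H) :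
    ‖A v‖ ^ 2 ≤ ‖A‖ * ⟪A v, v⟫ := by
  let b : LinearMap.BilinForm ℝ H := (innerₗ H).comp (A : H →ₗ[ℝ] H)
  have cs : ⟪A v, A v⟫ * ⟪A (A v), v⟫ ≤ ⟪A v, v⟫ * ⟪A (A v), A v⟫ :=
    b.apply_mul_apply_le_of_forall_zero_le hA.inner_nonneg_left v (A v)
  have hsymm : ⟪A (A v), v⟫ = ‖A v‖ ^ 2 := by
    rw [hA.inner_left_eq_inner_right, real_inner_self_eq_norm_sq]
  have hbound : ⟪A (A v), A v⟫ ≤ ‖A‖ * ‖A v‖ ^ 2 :=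
    calc ⟪A (A v), A v⟫ ≤ ‖A (A v)‖ * ‖A v‖ := real_inner_le_norm _ _
      _ ≤ ‖A‖ * ‖A v‖ * ‖A v‖ := by gcongr; exact A.le_opNorm _
      _ = ‖A‖ * ‖A v‖ ^ 2 := by ring
  rw [real_inner_self_eq_norm_sq, hsymm] at cs
  rcases (sq_nonneg ‖A v‖).eq_or_lt with h0 | hpos
  · rw [← h0]
    exact mul_nonneg (norm_nonneg A) (hA.inner_nonneg_left v)
  · nlinarith [mul_le_mul_of_nonneg_left hbound (hA.inner_nonneg_left v)]

theorem IsPositive.ringInverse (hA : A.IsPositive) : (Ring.inverse A).IsPositive := by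
  by_cases hAu : IsUnit A
  · refine (isPositive_iff _).2 ⟨fun x y => ?_, fun x => ?_⟩
    · calc ⟪Ring.inverse A x, y⟫ = ⟪Ring.inverse A x, A (Ring.inverse A y)⟫ := by
            rw [apply_ringInverse_apply hAu]
        _ = ⟪A (Ring.inverse A x), Ring.inverse A y⟫ := (hA.inner_left_eq_inner_right _ _).symm
        _ = ⟪x, Ring.inverse A y⟫ := by rw [apply_ringInverse_apply hAu]
    · calc 0 ≤ ⟪Ring.inverse A x, A (Ring.inverse A x)⟫ := hA.inner_nonneg_right _
        _ = ⟪Ring.inverse A x, x⟫ := by rw [apply_ringInverse_apply hAu]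
  · rw [Ring.inverse_non_unit A hAu]
    exact isPositive_zero

theorem IsPositive.norm_sq_le_inner_ringInverse (hA : A.IsPositive) (hAu : IsUnit A) (u : H) :
    ‖u‖ ^ 2 ≤ ‖A‖ * ⟪Ring.inverse A u, u⟫ := by
  simpa only [apply_ringInverse_apply hAu, real_inner_comm u] using
    hA.norm_apply_sq_le (Ring.inverse A u)

/-- `A + B` is coercive, with constant `1 / (‖A⁻¹‖ + 1)`. -/
theorem IsPositive.isUnit_add [CompleteSpace H] (hA : A.IsPositive) (hAu : IsUnit A)
    (hB : B.IsPositive) : IsUnit (A + B) := by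
  set c : NNReal := ‖Ring.inverse A‖₊ + 1
  have hc : 0 < c := by positivity
  refine isUnit_of_forall_le_norm_inner_map (A + B) (inv_pos.2 hc) fun u => ?_
  have hcoer : ‖u‖ ^ 2 ≤ c * ⟪A u, u⟫ := by
    have h := hA.ringInverse.norm_sq_le_inner_ringInverse hAu.ringInverse u
    rw [Ring.inverse_inverse hAu] at h
    simp only [c, NNReal.coe_add, coe_nnnorm, NNReal.coe_one]
    nlinarith [hA.inner_nonneg_left u]
  rw [NNReal.coe_inv, add_apply, inner_add_left,
    Real.norm_of_nonneg (add_nonneg (hA.inner_nonneg_left u) (hB.inner_nonneg_left u)),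
    ← div_eq_mul_inv, div_le_iff₀ (NNReal.coe_pos.2 hc)]
  nlinarith [hB.inner_nonneg_left u]

theorem isLeast_infConvolution_of_apply_eq (hA : A.IsPositive) (hB : B.IsPositive) {z₀ w₀ : H}
    (h : A z₀ = B w₀) :
    IsLeast
      (Set.range fun z : H => (1 / 2) * ⟪A z, z⟫ + (1 / 2) * ⟪B (z₀ + w₀ - z), z₀ + w₀ - z⟫)
      ((1 / 2) * ⟪A z₀, z₀⟫ + (1 / 2) * ⟪B w₀, w₀⟫) := by
  refine ⟨⟨z₀, by simp only [add_sub_cancel_left]⟩, ?_⟩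
  rintro _ ⟨z, rfl⟩
  obtain ⟨d, rfl⟩ : ∃ d, z = z₀ + d := ⟨z - z₀, by abel⟩
  have hw : z₀ + w₀ - (z₀ + d) = w₀ + -d := by abel
  have hAd := hA.isSymmetric.inner_map_add_add_self z₀ d
  have hBd := hB.isSymmetric.inner_map_add_add_self w₀ (-d)
  simp only [coe_coe, map_neg, inner_neg_left, inner_neg_right] at hAd hBd
  simp only [hw, hAd, hBd, h]
  linarith [hA.inner_nonneg_left d, hB.inner_nonneg_left d]

end ContinuousLinearMap

/-- For self-adjoint, positive, invertible bounded operators `A, B` on a real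
Hilbert space, the inf-convolution of the quadratic functionals `Q_A` and `Q_B` equals the
quadratic functional of the parallel sum `A // B = (A⁻¹ + B⁻¹)⁻¹`; i.e. for every `x`,
`(1/2)⟪(A⁻¹ + B⁻¹)⁻¹ x, x⟫` is the greatest lower bound of
`{ (1/2)⟪A z, z⟫ + (1/2)⟪B (x - z), x - z⟫ : z ∈ H }`. -/
theorem infConvolution_quadratic_eq_parallel_sum
    {H : Type*} [NormedAddCommGroup H] [InnerProductSpace ℝ H] [CompleteSpace H]
    (A B : H →L[ℝ] H) (hA : IsSelfAdjoint A) (hB : IsSelfAdjoint B)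
    (hApos : ∀ x : H, 0 ≤ ⟪A x, x⟫) (hBpos : ∀ x : H, 0 ≤ ⟪B x, x⟫)
    (hAinv : IsUnit A) (hBinv : IsUnit B) (x : H) :
    IsGLB
      (Set.range fun z : H => (1 / 2) * ⟪A z, z⟫ + (1 / 2) * ⟪B (x - z), x - z⟫)
      ((1 / 2) * ⟪(Ring.inverse (Ring.inverse A + Ring.inverse B)) x, x⟫) := by
  have hA' : A.IsPositive := (ContinuousLinearMap.isPositive_iff' A).2 ⟨hA, hApos⟩
  have hB' : B.IsPositive := (ContinuousLinearMap.isPositive_iff' B).2 ⟨hB, hBpos⟩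
  have hsum : IsUnit (Ring.inverse A + Ring.inverse B) :=
    hA'.ringInverse.isUnit_add hAinv.ringInverse hB'.ringInverse
  set y := Ring.inverse (Ring.inverse A + Ring.inverse B) x
  have hx : Ring.inverse A y + Ring.inverse B y = x :=
    ContinuousLinearMap.apply_ringInverse_apply hsum x
  have hAy : A (Ring.inverse A y) = y := ContinuousLinearMap.apply_ringInverse_apply hAinv y
  have hBy : B (Ring.inverse B y) = y := ContinuousLinearMap.apply_ringInverse_apply hBinv y
  have hmin := ContinuousLinearMap.isLeast_infConvolution_of_apply_eq hA' hB' (hAy.trans hBy.symm)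
  rw [hx, hAy, hBy, ← mul_add, ← inner_add_right, hx] at hmin
  exact hmin.isGLB
end

section
/- Let H be a complex Hilbert space, let A, B be positive invertible bounded linear operators on H, and let λ ∈ [0,1]. Then A !_λ B ≤ A ♯_λ B ≤ A ∇_λ B in the Loewner order, where A ∇_λ B = (1−λ)A + λB, A !_λ B = ((1−λ)A⁻¹ + λB⁻¹)⁻¹, and A ♯_λ B = A^{1/2} (A^{−1/2} B A^{−1/2})^λ A^{1/2}. -/
/-- The real power `A^r` of a bounded operator on a complex Hilbert space, via the continuous
functional calculus with the real function `x ↦ x ^ r`. -/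
noncomputable def opRpow {H : Type*} [NormedAddCommGroup H] [InnerProductSpace ℂ H]
    [CompleteSpace H] (A : H →L[ℂ] H) (r : ℝ) : H →L[ℂ] H :=
  cfc (fun x : ℝ => x ^ r) A

/-- The `λ`-weighted operator arithmetic mean `(1-λ)A + λB`. -/
noncomputable def opArith {H : Type*} [NormedAddCommGroup H] [InnerProductSpace ℂ H]
    [CompleteSpace H] (A B : H →L[ℂ] H) (l : ℝ) : H →L[ℂ] H :=
  (1 - l) • A + l • B

/-- The `λ`-weighted operator harmonic mean `((1-λ)A⁻¹ + λB⁻¹)⁻¹`. -/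
noncomputable def opHarm {H : Type*} [NormedAddCommGroup H] [InnerProductSpace ℂ H]
    [CompleteSpace H] (A B : H →L[ℂ] H) (l : ℝ) : H →L[ℂ] H :=
  Ring.inverse ((1 - l) • Ring.inverse A + l • Ring.inverse B)

/-- The `λ`-weighted operator geometric mean `A^{1/2} (A^{-1/2} B A^{-1/2})^λ A^{1/2}`. -/
noncomputable def opGeom {H : Type*} [NormedAddCommGroup H] [InnerProductSpace ℂ H]
    [CompleteSpace H] (A B : H →L[ℂ] H) (l : ℝ) : H →L[ℂ] H :=
  opRpow A (1 / 2) * opRpow (opRpow A (-(1 / 2)) * B * opRpow A (-(1 / 2))) l *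
    opRpow A (1 / 2)

/-! Congruence by `A^{-1/2}` is an order isomorphism that carries the three means of `A` and `B`
to the corresponding means of `1` and `C = A^{-1/2} B A^{-1/2}`. These are functions of the single
operator `C`, so `C^λ ≤ (1-λ) + λC` follows from the scalar weighted AM–GM (Bernoulli) inequality
through the functional calculus. The harmonic–geometric inequality is the same inequality for
`C⁻¹`, inverted using that operator inversion is order-reversing. -/

open CFC Ring

theorem Real.rpow_le_one_sub_add_mul {x l : ℝ} (hx : 0 ≤ x) (hl0 : 0 ≤ l) (hl1 : l ≤ 1) :
    x ^ l ≤ (1 - l) + l * x := by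
  have := rpow_one_add_le_one_add_mul_self (s := x - 1) (by linarith) hl0 hl1
  rw [add_sub_cancel] at this
  linarith

namespace CFC

variable {E : Type*} [CStarAlgebra E] [PartialOrder E] [StarOrderedRing E]

theorem ringInverse_rpow_neg {c : E} (hc : IsStrictlyPositive c) (x : ℝ) :
    (c ^ (-x))⁻¹ʳ = c ^ x :=
  Ring.inverse_unit ⟨c ^ (-x), c ^ x, rpow_neg_mul_rpow x hc, rpow_mul_rpow_neg x hc⟩

theorem ringInverse_rpow {c : E} (hc : IsStrictlyPositive c) (x : ℝ) :
    c⁻¹ʳ ^ x = c ^ (-x) := by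
  rw [inverse_eq_rpow_neg_one hc, rpow_rpow c _ _ (by norm_num) hc, neg_one_mul]

theorem rpow_le_one_sub_smul_one_add_smul {c : E} (hc : 0 ≤ c) {l : ℝ} (hl0 : 0 ≤ l)
    (hl1 : l ≤ 1) : c ^ l ≤ (1 - l) • (1 : E) + l • c := by
  have key : cfc (fun x : ℝ => x ^ l) c ≤ cfc (fun x : ℝ => (1 - l) + l * x) c :=
    cfc_mono fun x hx => Real.rpow_le_one_sub_add_mul (spectrum_nonneg_of_nonneg hc hx) hl0 hl1
  rwa [← rpow_eq_cfc_real hc, cfc_const_add _ _ c, cfc_const_mul_id _ c,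
    Algebra.algebraMap_eq_smul_one] at key

theorem ringInverse_one_sub_smul_one_add_smul_ringInverse_le_rpow {c : E}
    (hc : IsStrictlyPositive c) {l : ℝ} (hl0 : 0 ≤ l) (hl1 : l ≤ 1) :
    ((1 - l) • (1 : E) + l • c⁻¹ʳ)⁻¹ʳ ≤ c ^ l := by
  calc ((1 - l) • (1 : E) + l • c⁻¹ʳ)⁻¹ʳ ≤ (c⁻¹ʳ ^ l)⁻¹ʳ :=
        CStarAlgebra.ringInverse_le_ringInverse
          (rpow_le_one_sub_smul_one_add_smul hc.ringInverse.nonneg hl0 hl1)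
    _ = c ^ l := by rw [ringInverse_rpow hc, ringInverse_rpow_neg hc]

theorem conjSqrt_one_sub_smul_one_add_smul {a : E} (ha : 0 ≤ a) (c : E) (l : ℝ) :
    conjSqrt a ((1 - l) • 1 + l • c) = (1 - l) • a + l • conjSqrt a c := by
  rw [map_add, map_smul, map_smul, conjSqrt_one a ha]

theorem conjSqrt_ringInverse_one_sub_smul_one_add_smul_ringInverse {a : E}
    (ha : IsStrictlyPositive a) (c : E) (l : ℝ) :
    conjSqrt a ((1 - l) • 1 + l • c⁻¹ʳ)⁻¹ʳ = ((1 - l) • a⁻¹ʳ + l • (conjSqrt a c)⁻¹ʳ)⁻¹ʳ := by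
  rw [ringInverse_conjSqrt a c ha, ← conjSqrt_one_sub_smul_one_add_smul ha.ringInverse.nonneg,
    ringInverse_conjSqrt _ _ ha.ringInverse, Ring.inverse_inverse ha.isUnit]

end CFC

section Means

variable {H : Type*} [NormedAddCommGroup H] [InnerProductSpace ℂ H] [CompleteSpace H]

theorem opRpow_eq_rpow {A : H →L[ℂ] H} (hA : 0 ≤ A) (r : ℝ) : opRpow A r = A ^ r :=
  (rpow_eq_cfc_real hA).symm

theorem opGeom_eq_conjSqrt {A B : H →L[ℂ] H} (hA : IsStrictlyPositive A) (hB : 0 ≤ B) (l : ℝ) :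
    opGeom A B l = conjSqrt A (conjSqrt A⁻¹ʳ B ^ l) := by
  have hsqrt : opRpow A (1 / 2) = sqrt A := by rw [opRpow_eq_rpow hA.nonneg, sqrt_eq_rpow]
  have hsqrt_inv : opRpow A (-(1 / 2)) = sqrt A⁻¹ʳ := by
    rw [opRpow_eq_rpow hA.nonneg, ← ringInverse_rpow hA, sqrt_eq_rpow]
  have hC : 0 ≤ conjSqrt A⁻¹ʳ B := by simpa using conjSqrt_monotone (c := A⁻¹ʳ) hB
  rw [opGeom, hsqrt, hsqrt_inv, ← conjSqrt_apply (c := A⁻¹ʳ), opRpow_eq_rpow hC,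
    ← conjSqrt_apply]

theorem opArith_eq_conjSqrt {A : H →L[ℂ] H} (hA : IsStrictlyPositive A) (B : H →L[ℂ] H) (l : ℝ) :
    opArith A B l = conjSqrt A ((1 - l) • 1 + l • conjSqrt A⁻¹ʳ B) := by
  rw [conjSqrt_one_sub_smul_one_add_smul hA.nonneg, conjSqrt_conjSqrt_ringInverse A B hA, opArith]

theorem opHarm_eq_conjSqrt {A : H →L[ℂ] H} (hA : IsStrictlyPositive A) (B : H →L[ℂ] H) (l : ℝ) :
    opHarm A B l = conjSqrt A ((1 - l) • 1 + l • (conjSqrt A⁻¹ʳ B)⁻¹ʳ)⁻¹ʳ := by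
  rw [conjSqrt_ringInverse_one_sub_smul_one_add_smul_ringInverse hA,
    conjSqrt_conjSqrt_ringInverse A B hA, opHarm]

end Means

/-- Harmonic–geometric–arithmetic mean inequalities in the Loewner order:
`A !_λ B ≤ A ♯_λ B ≤ A ∇_λ B` for positive invertible operators `A, B` and `λ ∈ [0,1]`. -/
theorem harm_le_geom_le_arith_operator
    {H : Type*} [NormedAddCommGroup H] [InnerProductSpace ℂ H] [CompleteSpace H]
    (A B : H →L[ℂ] H)
    (hA : A.IsPositive) (hAinv : IsUnit A)
    (hB : B.IsPositive) (hBinv : IsUnit B)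
    (l : ℝ) (hl : l ∈ Set.Icc (0 : ℝ) 1) :
    (opGeom A B l - opHarm A B l).IsPositive ∧
      (opArith A B l - opGeom A B l).IsPositive := by
  obtain ⟨hl0, hl1⟩ := hl
  have hA' : IsStrictlyPositive A :=
    IsStrictlyPositive.iff_of_unital.mpr ⟨A.nonneg_iff_isPositive.mpr hA, hAinv⟩
  have hB' : IsStrictlyPositive B :=
    IsStrictlyPositive.iff_of_unital.mpr ⟨B.nonneg_iff_isPositive.mpr hB, hBinv⟩
  have hC : IsStrictlyPositive (conjSqrt A⁻¹ʳ B) :=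
    (isStrictlyPositive_conjSqrt_iff _ _ hA'.ringInverse).mpr hB'
  simp only [← ContinuousLinearMap.nonneg_iff_isPositive, sub_nonneg]
  rw [opGeom_eq_conjSqrt hA' hB'.nonneg, opHarm_eq_conjSqrt hA', opArith_eq_conjSqrt hA']
  exact ⟨conjSqrt_monotone (ringInverse_one_sub_smul_one_add_smul_ringInverse_le_rpow hC hl0 hl1),
    conjSqrt_monotone (rpow_le_one_sub_smul_one_add_smul hC.nonneg hl0 hl1)⟩
end

section
/- Let E be a real normed vector space, let λ, t ∈ (0,1), and let f₁, g₁, f₂, g₂ : E → ℝ be convex continuous functions such that for every φ ∈ E* each of the sets {φ(u) − f₁(u) : u ∈ E}, {φ(u) − g₁(u) : u ∈ E}, {φ(u) − f₂(u) : u ∈ E}, {φ(u) − g₂(u) : u ∈ E} is bounded above. Then for every x ∈ E, (((1−t)f₁ + t f₂) !_λ ((1−t)g₁ + t g₂))(x) ≥ (1−t)(f₁ !_λ g₁)(x) + t(f₂ !_λ g₂)(x), and the same inequality holds with ♯_λ in place of !_λ; that is, the weighted functional harmonic and geometric means are pointwise concave as maps of the pair (f, g). -/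
/-!
For fixed `s`, `(f !_s g)(x)` is the supremum of `φ x - (1 - s) c₁ - s c₂` over triples
`(φ, c₁, c₂)` with `φ - c₁ ≤ f` and `φ - c₂ ≤ g`. These constraints and the objective are linear
in the triple, so a convex combination of admissible triples for `(f₁, g₁)` and `(f₂, g₂)` is
admissible for the combined pair: `!_s` is concave in `(f, g)` for every `s ∈ [0, 1]`.
Integrating against the nonnegative weight `s ^ (λ - 1) (1 - s) ^ (-λ)` gives the same for `♯_λ`.
The integrals exist because `s ↦ (f !_s g)(x)` is a supremum of affine functions of `s`, hence
convex and continuous on `(0, 1)`, and it is squeezed between two affine functions of `s`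
once `f` and `g` are bounded below.
-/

open Real

/-- The `t`-weighted functional harmonic mean of `f,g : E → ℝ`, evaluated at `x`. -/
noncomputable def funHarm {E : Type*} [NormedAddCommGroup E] [NormedSpace ℝ E]
    (f g : E → ℝ) (t : ℝ) (x : E) : ℝ :=
  sSup { r : ℝ | ∃ φ : E →L[ℝ] ℝ, ∃ c₁ c₂ : ℝ,
    (∀ u : E, φ u - f u ≤ c₁) ∧ (∀ u : E, φ u - g u ≤ c₂) ∧
    r = φ x - (1 - t) * c₁ - t * c₂ }

/-- The `λ`-weighted functional geometric mean of `f,g : E → ℝ`, evaluated at `x`. -/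
noncomputable def funGeom {E : Type*} [NormedAddCommGroup E] [NormedSpace ℝ E]
    (f g : E → ℝ) (l : ℝ) (x : E) : ℝ :=
  (Real.sin (π * l) / π) *
    ∫ t in (0 : ℝ)..1, t ^ (l - 1) * (1 - t) ^ (-l) * funHarm f g t x

open Set MeasureTheory
open scoped Pointwise

theorem mul_sSup_add_mul_sSup_le {S₁ S₂ S₃ : Set ℝ} {a b : ℝ} (ha : 0 ≤ a) (hb : 0 ≤ b)
    (hne₁ : S₁.Nonempty) (hbdd₁ : BddAbove S₁) (hne₂ : S₂.Nonempty) (hbdd₂ : BddAbove S₂)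
    (hbdd₃ : BddAbove S₃) (hsub : a • S₁ + b • S₂ ⊆ S₃) :
    a * sSup S₁ + b * sSup S₂ ≤ sSup S₃ := by
  rw [← smul_eq_mul, ← smul_eq_mul, ← Real.sSup_smul_of_nonneg ha,
    ← Real.sSup_smul_of_nonneg hb, ← csSup_add hne₁.smul_set (hbdd₁.smul_of_nonneg ha)
      hne₂.smul_set (hbdd₂.smul_of_nonneg hb)]
  exact csSup_le_csSup hbdd₃ (hne₁.smul_set.add hne₂.smul_set) hsub

theorem bddBelow_range_mul_add_mul {α : Type*} {f g : α → ℝ} {a b : ℝ} (ha : 0 ≤ a)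
    (hb : 0 ≤ b) (hf : BddBelow (range f)) (hg : BddBelow (range g)) :
    BddBelow (range fun u => a * f u + b * g u) :=
  (hf.range_comp_left (monotone_mul_left_of_nonneg ha)).range_add
    (hg.range_comp_left (monotone_mul_left_of_nonneg hb))

theorem abs_convex_combo_le_abs_add_abs {a b s : ℝ} (hs : s ∈ Icc (0 : ℝ) 1) :
    |(1 - s) * a + s * b| ≤ |a| + |b| :=
  calc |(1 - s) * a + s * b| ≤ (1 - s) * |a| + s * |b| := by
        refine (abs_add_le _ _).trans_eq ?_
        rw [abs_mul, abs_mul, abs_of_nonneg hs.1, abs_of_nonneg (sub_nonneg.2 hs.2)]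
    _ ≤ |a| + |b| := by nlinarith [abs_nonneg a, abs_nonneg b, hs.1, hs.2]

theorem intervalIntegrable_rpow_mul_one_sub_rpow {a b : ℝ} (ha : -1 < a) (hb : -1 < b) :
    IntervalIntegrable (fun t : ℝ => t ^ a * (1 - t) ^ b) volume 0 1 := by
  have lower_half : ∀ {a' b' : ℝ}, -1 < a' →
      IntervalIntegrable (fun t : ℝ => t ^ a' * (1 - t) ^ b') volume 0 (1 / 2) := by
    intro a' b' ha'
    refine (intervalIntegral.intervalIntegrable_rpow' ha').mul_continuousOn
      (ContinuousOn.rpow_const (by fun_prop) fun t ht => Or.inl ?_)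
    rw [uIcc_of_le (by norm_num)] at ht
    linarith [ht.2]
  have upper_half := (lower_half (a' := b) (b' := a) hb).comp_sub_left 1
  norm_num at upper_half
  exact (lower_half ha).trans (upper_half.symm.congr fun t _ => by ring)

section harmSet

variable {E : Type*} [NormedAddCommGroup E] [NormedSpace ℝ E]

def harmSet (f g : E → ℝ) (s : ℝ) (x : E) : Set ℝ :=
  { r : ℝ | ∃ φ : E →L[ℝ] ℝ, ∃ c₁ c₂ : ℝ,
    (∀ u : E, φ u - f u ≤ c₁) ∧ (∀ u : E, φ u - g u ≤ c₂) ∧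
    r = φ x - (1 - s) * c₁ - s * c₂ }

variable {f g : E → ℝ} {s : ℝ} {x : E}

theorem le_of_mem_harmSet (hs : s ∈ Icc (0 : ℝ) 1) {r : ℝ} (hr : r ∈ harmSet f g s x) :
    r ≤ (1 - s) * f x + s * g x := by
  obtain ⟨φ, c₁, c₂, h₁, h₂, rfl⟩ := hr
  nlinarith [h₁ x, h₂ x, hs.1, hs.2]

theorem bddAbove_harmSet (hs : s ∈ Icc (0 : ℝ) 1) : BddAbove (harmSet f g s x) :=
  ⟨_, fun _ => le_of_mem_harmSet hs⟩

theorem mem_harmSet_of_forall_le {c₁ c₂ : ℝ} (h₁ : ∀ u, c₁ ≤ f u) (h₂ : ∀ u, c₂ ≤ g u) :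
    (1 - s) * c₁ + s * c₂ ∈ harmSet f g s x :=
  ⟨0, -c₁, -c₂, fun u => by simpa using h₁ u, fun u => by simpa using h₂ u, by simp⟩

theorem harmSet_nonempty (hf : BddBelow (range f)) (hg : BddBelow (range g)) :
    (harmSet f g s x).Nonempty := by
  obtain ⟨c₁, hc₁⟩ := hf
  obtain ⟨c₂, hc₂⟩ := hg
  exact ⟨_, mem_harmSet_of_forall_le (fun u => hc₁ ⟨u, rfl⟩) (fun u => hc₂ ⟨u, rfl⟩)⟩

theorem smul_harmSet_add_smul_harmSet_subset {f₁ g₁ f₂ g₂ : E → ℝ} {a b : ℝ}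
    (ha : 0 ≤ a) (hb : 0 ≤ b) :
    a • harmSet f₁ g₁ s x + b • harmSet f₂ g₂ s x ⊆
      harmSet (fun u => a * f₁ u + b * f₂ u) (fun u => a * g₁ u + b * g₂ u) s x := by
  rintro _ ⟨_, ⟨_, ⟨φ₁, c₁, c₂, hc₁, hc₂, rfl⟩, rfl⟩, _, ⟨_, ⟨φ₂, d₁, d₂, hd₁, hd₂, rfl⟩, rfl⟩,
    rfl⟩
  refine ⟨a • φ₁ + b • φ₂, a * c₁ + b * d₁, a * c₂ + b * d₂, fun u => ?_, fun u => ?_, ?_⟩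
  all_goals simp only [add_apply, FunLike.coe_smul, Pi.smul_apply, smul_eq_mul]
  · nlinarith [mul_le_mul_of_nonneg_left (hc₁ u) ha, mul_le_mul_of_nonneg_left (hd₁ u) hb]
  · nlinarith [mul_le_mul_of_nonneg_left (hc₂ u) ha, mul_le_mul_of_nonneg_left (hd₂ u) hb]
  · ring

variable {f₁ g₁ f₂ g₂ : E → ℝ} {a b : ℝ}

theorem mul_funHarm_add_mul_funHarm_le (ha : 0 ≤ a) (hb : 0 ≤ b) (hs : s ∈ Icc (0 : ℝ) 1)
    (hf₁ : BddBelow (range f₁)) (hg₁ : BddBelow (range g₁))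
    (hf₂ : BddBelow (range f₂)) (hg₂ : BddBelow (range g₂)) :
    a * funHarm f₁ g₁ s x + b * funHarm f₂ g₂ s x ≤
      funHarm (fun u => a * f₁ u + b * f₂ u) (fun u => a * g₁ u + b * g₂ u) s x :=
  mul_sSup_add_mul_sSup_le ha hb (harmSet_nonempty hf₁ hg₁) (bddAbove_harmSet hs)
    (harmSet_nonempty hf₂ hg₂) (bddAbove_harmSet hs) (bddAbove_harmSet hs)
    (smul_harmSet_add_smul_harmSet_subset ha hb)

theorem funHarm_mem_Icc {c₁ c₂ : ℝ} (h₁ : ∀ u, c₁ ≤ f u) (h₂ : ∀ u, c₂ ≤ g u)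
    (hs : s ∈ Icc (0 : ℝ) 1) :
    funHarm f g s x ∈ Icc ((1 - s) * c₁ + s * c₂) ((1 - s) * f x + s * g x) :=
  ⟨le_csSup (bddAbove_harmSet hs) (mem_harmSet_of_forall_le h₁ h₂),
    csSup_le ⟨_, mem_harmSet_of_forall_le h₁ h₂⟩ fun _ => le_of_mem_harmSet hs⟩

theorem exists_abs_funHarm_le (hf : BddBelow (range f)) (hg : BddBelow (range g)) (x : E) :
    ∃ C, ∀ s ∈ Icc (0 : ℝ) 1, |funHarm f g s x| ≤ C := by
  obtain ⟨c₁, hc₁⟩ := hf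
  obtain ⟨c₂, hc₂⟩ := hg
  refine ⟨(|c₁| + |c₂|) + (|f x| + |g x|), fun s hs => ?_⟩
  obtain ⟨hlo, hhi⟩ := funHarm_mem_Icc (x := x) (fun u => hc₁ ⟨u, rfl⟩) (fun u => hc₂ ⟨u, rfl⟩) hs
  exact (abs_le_max_abs_abs hlo hhi).trans <|
    (max_le_max (abs_convex_combo_le_abs_add_abs hs) (abs_convex_combo_le_abs_add_abs hs)).trans
      (max_le_add_of_nonneg (by positivity) (by positivity))

theorem convexOn_funHarm (hf : BddBelow (range f)) (hg : BddBelow (range g)) (x : E) :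
    ConvexOn ℝ (Icc 0 1) (fun s => funHarm f g s x) := by
  refine ⟨convex_Icc 0 1, fun s hs r hr a b ha hb hab => ?_⟩
  refine csSup_le (harmSet_nonempty hf hg) ?_
  rintro _ ⟨φ, c₁, c₂, h₁, h₂, rfl⟩
  have le₁ : φ x - (1 - s) * c₁ - s * c₂ ≤ funHarm f g s x :=
    le_csSup (bddAbove_harmSet hs) ⟨φ, c₁, c₂, h₁, h₂, rfl⟩
  have le₂ : φ x - (1 - r) * c₁ - r * c₂ ≤ funHarm f g r x :=
    le_csSup (bddAbove_harmSet hr) ⟨φ, c₁, c₂, h₁, h₂, rfl⟩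
  calc φ x - (1 - (a • s + b • r)) * c₁ - (a • s + b • r) * c₂
      = a * (φ x - (1 - s) * c₁ - s * c₂) + b * (φ x - (1 - r) * c₁ - r * c₂) := by
        simp only [smul_eq_mul]
        linear_combination (c₁ - φ x) * hab
    _ ≤ a • funHarm f g s x + b • funHarm f g r x :=
        add_le_add (mul_le_mul_of_nonneg_left le₁ ha) (mul_le_mul_of_nonneg_left le₂ hb)

theorem intervalIntegrable_weight_mul_funHarm {l : ℝ} (hl : l ∈ Ioo (0 : ℝ) 1)
    (hf : BddBelow (range f)) (hg : BddBelow (range g)) (x : E) :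
    IntervalIntegrable (fun s => s ^ (l - 1) * (1 - s) ^ (-l) * funHarm f g s x) volume 0 1 := by
  have hw := intervalIntegrable_rpow_mul_one_sub_rpow (a := l - 1) (b := -l)
    (by linarith [hl.1]) (by linarith [hl.2])
  rw [intervalIntegrable_iff_integrableOn_Ioo_of_le zero_le_one] at hw ⊢
  obtain ⟨C, hC⟩ := exists_abs_funHarm_le hf hg x
  have hcont : ContinuousOn (fun s => funHarm f g s x) (Ioo 0 1) :=
    ((convexOn_funHarm hf hg x).subset Ioo_subset_Icc_self (convex_Ioo 0 1)).continuousOn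
      isOpen_Ioo
  refine hw.mul_bdd (c := C) (hcont.aestronglyMeasurable measurableSet_Ioo) ?_
  exact (ae_restrict_iff' measurableSet_Ioo).2 <| .of_forall fun s hs => by
    simpa only [Real.norm_eq_abs] using hC s (Ioo_subset_Icc_self hs)

theorem mul_funGeom_add_mul_funGeom_le {l : ℝ} (hl : l ∈ Ioo (0 : ℝ) 1) (ha : 0 ≤ a) (hb : 0 ≤ b)
    (hf₁ : BddBelow (range f₁)) (hg₁ : BddBelow (range g₁))
    (hf₂ : BddBelow (range f₂)) (hg₂ : BddBelow (range g₂)) (x : E) :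
    a * funGeom f₁ g₁ l x + b * funGeom f₂ g₂ l x ≤
      funGeom (fun u => a * f₁ u + b * f₂ u) (fun u => a * g₁ u + b * g₂ u) l x := by
  have I₁ := intervalIntegrable_weight_mul_funHarm hl hf₁ hg₁ x
  have I₂ := intervalIntegrable_weight_mul_funHarm hl hf₂ hg₂ x
  have I₃ := intervalIntegrable_weight_mul_funHarm hl (bddBelow_range_mul_add_mul ha hb hf₁ hf₂)
    (bddBelow_range_mul_add_mul ha hb hg₁ hg₂) x
  have hint := intervalIntegral.integral_mono_on zero_le_one
    ((I₁.const_mul a).add (I₂.const_mul b)) I₃ fun s hs => by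
      have hw : 0 ≤ s ^ (l - 1) * (1 - s) ^ (-l) :=
        mul_nonneg (rpow_nonneg hs.1 _) (rpow_nonneg (sub_nonneg.2 hs.2) _)
      have := mul_le_mul_of_nonneg_left
        (mul_funHarm_add_mul_funHarm_le (x := x) ha hb hs hf₁ hg₁ hf₂ hg₂) hw
      linarith
  rw [intervalIntegral.integral_add (I₁.const_mul a) (I₂.const_mul b),
    intervalIntegral.integral_const_mul, intervalIntegral.integral_const_mul] at hint
  have hc : 0 ≤ Real.sin (π * l) / π := div_nonneg (Real.sin_nonneg_of_nonneg_of_le_pi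
    (by nlinarith [pi_pos, hl.1]) (by nlinarith [pi_pos, hl.2])) pi_pos.le
  unfold funGeom
  linarith [mul_le_mul_of_nonneg_left hint hc]

end harmSet

theorem funHarm_funGeom_concave_general
    {E : Type*} [NormedAddCommGroup E] [NormedSpace ℝ E]
    (l t : ℝ) (hl : l ∈ Set.Ioo (0 : ℝ) 1) (ht : t ∈ Set.Ioo (0 : ℝ) 1)
    (f₁ g₁ f₂ g₂ : E → ℝ)
    (hbf₁ : ∀ φ : E →L[ℝ] ℝ, BddAbove (Set.range fun u : E => φ u - f₁ u))
    (hbg₁ : ∀ φ : E →L[ℝ] ℝ, BddAbove (Set.range fun u : E => φ u - g₁ u))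
    (hbf₂ : ∀ φ : E →L[ℝ] ℝ, BddAbove (Set.range fun u : E => φ u - f₂ u))
    (hbg₂ : ∀ φ : E →L[ℝ] ℝ, BddAbove (Set.range fun u : E => φ u - g₂ u)) :
    ∀ x : E,
      (1 - t) * funHarm f₁ g₁ l x + t * funHarm f₂ g₂ l x ≤
        funHarm (fun u => (1 - t) * f₁ u + t * f₂ u) (fun u => (1 - t) * g₁ u + t * g₂ u) l x ∧
      (1 - t) * funGeom f₁ g₁ l x + t * funGeom f₂ g₂ l x ≤
        funGeom (fun u => (1 - t) * f₁ u + t * f₂ u) (fun u => (1 - t) * g₁ u + t * g₂ u) l x := by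
  intro x
  have hbdd : ∀ h : E → ℝ, (∀ φ : E →L[ℝ] ℝ, BddAbove (range fun u => φ u - h u)) →
      BddBelow (range h) := fun h hb => by simpa using (hb 0).range_neg
  have ht' : 0 ≤ 1 - t := sub_nonneg.2 ht.2.le
  exact ⟨mul_funHarm_add_mul_funHarm_le ht' ht.1.le (Ioo_subset_Icc_self hl) (hbdd f₁ hbf₁)
      (hbdd g₁ hbg₁) (hbdd f₂ hbf₂) (hbdd g₂ hbg₂),
    mul_funGeom_add_mul_funGeom_le hl ht' ht.1.le (hbdd f₁ hbf₁) (hbdd g₁ hbg₁)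
      (hbdd f₂ hbf₂) (hbdd g₂ hbg₂) x⟩

/-- The weighted functional harmonic and geometric means are pointwise
concave as maps of the pair `(f, g)`. -/
theorem funHarm_funGeom_concave
    {E : Type*} [NormedAddCommGroup E] [NormedSpace ℝ E]
    (l t : ℝ) (hl : l ∈ Set.Ioo (0 : ℝ) 1) (ht : t ∈ Set.Ioo (0 : ℝ) 1)
    (f₁ g₁ f₂ g₂ : E → ℝ)
    (hf₁ : ConvexOn ℝ Set.univ f₁) (hf₁c : Continuous f₁)
    (hg₁ : ConvexOn ℝ Set.univ g₁) (hg₁c : Continuous g₁)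
    (hf₂ : ConvexOn ℝ Set.univ f₂) (hf₂c : Continuous f₂)
    (hg₂ : ConvexOn ℝ Set.univ g₂) (hg₂c : Continuous g₂)
    (hbf₁ : ∀ φ : E →L[ℝ] ℝ, BddAbove (Set.range fun u : E => φ u - f₁ u))
    (hbg₁ : ∀ φ : E →L[ℝ] ℝ, BddAbove (Set.range fun u : E => φ u - g₁ u))
    (hbf₂ : ∀ φ : E →L[ℝ] ℝ, BddAbove (Set.range fun u : E => φ u - f₂ u))
    (hbg₂ : ∀ φ : E →L[ℝ] ℝ, BddAbove (Set.range fun u : E => φ u - g₂ u)) :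
    ∀ x : E,
      (1 - t) * funHarm f₁ g₁ l x + t * funHarm f₂ g₂ l x ≤
        funHarm (fun u => (1 - t) * f₁ u + t * f₂ u) (fun u => (1 - t) * g₁ u + t * g₂ u) l x ∧
      (1 - t) * funGeom f₁ g₁ l x + t * funGeom f₂ g₂ l x ≤
        funGeom (fun u => (1 - t) * f₁ u + t * f₂ u) (fun u => (1 - t) * g₁ u + t * g₂ u) l x :=
  funHarm_funGeom_concave_general l t hl ht f₁ g₁ f₂ g₂ hbf₁ hbg₁ hbf₂ hbg₂
end

section
/- Let E be a real normed vector space and let f, g : E → ℝ be convex continuous functions admitting a common continuous affine minorant (there exist φ₀ ∈ E* and c ∈ ℝ with φ₀(u) − c ≤ f(u) and φ₀(u) − c ≤ g(u) for all u ∈ E). Then ∫₀¹ dt / ( t(1−t)(π² + (log(t/(1−t)))²) ) = 1, and for every x ∈ E, L(f,g)(x) = ∫₀¹ (f !_t g)(x) / ( t(1−t)(π² + (log(t/(1−t)))²) ) dt; that is, the logarithmic mean is the integral of the weighted harmonic means against the probability density Ψ(t) = 1/( t(1−t)(π² + (log(t/(1−t)))²) ) on (0,1). -/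
open Real

/-- The logarithmic mean `L(f,g)(x) = ∫₀¹ (f ♯_t g)(x) dt`. -/
noncomputable def funLog {E : Type*} [NormedAddCommGroup E] [NormedSpace ℝ E]
    (f g : E → ℝ) (x : E) : ℝ :=
  ∫ t in (0 : ℝ)..1, funGeom f g t x

open MeasureTheory Set Filter Topology

/-!
Write `Ψ t = 1 / (t * (1 - t) * (π ^ 2 + log (t / (1 - t)) ^ 2))`. It has the antiderivative
`π⁻¹ * arctan (log (t / (1 - t)) / π)`, which rises from `-1/2` to `1/2` on `(0, 1)`, so `Ψ` has
total mass one. For fixed `t`, putting `b = log (t / (1 - t))` turns the kernel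
`sin (π λ) / π * t ^ (λ - 1) * (1 - t) ^ (-λ)` of `♯_λ` into `(π t)⁻¹ * exp (b λ) * sin (π λ)`,
whose integral over `λ ∈ (0, 1)` is exactly `Ψ t`; exchanging the two integrals then gives
`L(f, g)(x) = ∫ (f !_t g)(x) Ψ(t) dt`. Fubini applies because `t ↦ (f !_t g)(x)` is a supremum
of affine functions of `t`, hence convex and so continuous on `(0, 1)`, and it is bounded,
squeezed between `φ₀ x - c` and `(1 - t) f x + t g x`.
-/

theorem intervalIntegrable_deriv_of_nonneg_of_tendsto {G g : ℝ → ℝ} {a b la lb : ℝ} (hab : a < b)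
    (hderiv : ∀ x ∈ Ioo a b, HasDerivAt G (g x) x) (hpos : ∀ x ∈ Ioo a b, 0 ≤ g x)
    (ha : Tendsto G (𝓝[>] a) (𝓝 la)) (hb : Tendsto G (𝓝[<] b) (𝓝 lb)) :
    IntervalIntegrable g volume a b := by
  have hG : ContinuousOn G (Ioo a b) := fun x hx => (hderiv x hx).continuousAt.continuousWithinAt
  refine (intervalIntegrable_iff_integrableOn_Ioc_of_le hab.le).2 <|
    intervalIntegral.integrableOn_deriv_of_nonneg (continuousOn_Icc_extendFrom_Ioo hG ha hb)
      (fun x hx => (hderiv x hx).congr_of_eventuallyEq ?_) hpos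
  filter_upwards [isOpen_Ioo.mem_nhds hx] with y hy using extendFrom_extends hG y hy

theorem integral_exp_mul_mul_sin_pi_mul (b : ℝ) :
    ∫ l in (0 : ℝ)..1, exp (b * l) * sin (π * l) = π * (exp b + 1) / (b ^ 2 + π ^ 2) := by
  have hderiv (l : ℝ) : HasDerivAt
      (fun l => exp (b * l) * (b * sin (π * l) - π * cos (π * l)) / (b ^ 2 + π ^ 2))
      (exp (b * l) * sin (π * l)) l := by
    have hb : HasDerivAt (fun l => b * l) b l := by simpa using (hasDerivAt_id l).const_mul b
    have hπ : HasDerivAt (fun l => π * l) π l := by simpa using (hasDerivAt_id l).const_mul π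
    refine ((hb.exp.mul ((hπ.sin.const_mul b).sub (hπ.cos.const_mul π))).div_const _).congr_deriv ?_
    simp only [Pi.sub_apply]
    field_simp
    ring
  rw [intervalIntegral.integral_eq_sub_of_hasDerivAt (fun l _ => hderiv l)
    ((by fun_prop : Continuous fun l => exp (b * l) * sin (π * l)).intervalIntegrable 0 1)]
  simp only [mul_one, mul_zero, sin_pi, cos_pi, sin_zero, cos_zero, exp_zero]
  field_simp
  ring

noncomputable def logMeanDenom (t : ℝ) : ℝ := t * (1 - t) * (π ^ 2 + Real.log (t / (1 - t)) ^ 2)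

theorem logMeanDenom_pos {t : ℝ} (ht : t ∈ Ioo (0 : ℝ) 1) : 0 < logMeanDenom t := by
  have h₀ : 0 < t := ht.1
  have h₁ : 0 < 1 - t := sub_pos.2 ht.2
  unfold logMeanDenom
  positivity

theorem hasDerivAt_arctan_log_div {t : ℝ} (ht : t ∈ Ioo (0 : ℝ) 1) :
    HasDerivAt (fun t => π⁻¹ * arctan (Real.log (t / (1 - t)) / π)) (1 / logMeanDenom t) t := by
  have h₀ : t ≠ 0 := ht.1.ne'
  have h₁ : 1 - t ≠ 0 := (sub_pos.2 ht.2).ne'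
  have hdiv : HasDerivAt (fun t => t / (1 - t)) (1 / (1 - t) ^ 2) t := by
    refine ((hasDerivAt_id t).div ((hasDerivAt_id t).const_sub 1) h₁).congr_deriv ?_
    simp
  refine ((((hdiv.log (div_ne_zero h₀ h₁)).div_const π).arctan).const_mul π⁻¹).congr_deriv ?_
  unfold logMeanDenom
  field_simp

theorem tendsto_one_sub_nhdsGT_zero : Tendsto (fun t : ℝ => 1 - t) (𝓝[>] 0) (𝓝[<] 1) :=
  tendsto_nhdsWithin_iff.2
    ⟨((continuous_const.sub continuous_id).tendsto' 0 1 (by simp)).mono_left nhdsWithin_le_nhds,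
      eventually_nhdsWithin_of_forall fun t ht => show 1 - t < 1 from sub_lt_self 1 ht⟩

theorem tendsto_one_sub_nhdsLT_one : Tendsto (fun t : ℝ => 1 - t) (𝓝[<] 1) (𝓝[>] 0) :=
  tendsto_nhdsWithin_iff.2
    ⟨((continuous_const.sub continuous_id).tendsto' 1 0 (by simp)).mono_left nhdsWithin_le_nhds,
      eventually_nhdsWithin_of_forall fun t ht => show 0 < 1 - t from sub_pos.2 ht⟩

theorem tendsto_log_div_one_sub_nhdsLT_one :
    Tendsto (fun t : ℝ => Real.log (t / (1 - t))) (𝓝[<] 1) atTop :=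
  tendsto_log_atTop.comp <| Tendsto.pos_mul_atTop one_pos
    (tendsto_nhdsWithin_of_tendsto_nhds (continuous_id.tendsto 1))
    (tendsto_inv_nhdsGT_zero.comp tendsto_one_sub_nhdsLT_one)

theorem tendsto_arctan_log_div_nhdsLT_one :
    Tendsto (fun t => π⁻¹ * arctan (Real.log (t / (1 - t)) / π)) (𝓝[<] 1) (𝓝 (1 / 2)) := by
  have := ((tendsto_arctan_atTop.mono_right nhdsWithin_le_nhds).comp
    (tendsto_log_div_one_sub_nhdsLT_one.atTop_div_const pi_pos)).const_mul π⁻¹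
  rwa [show π⁻¹ * (π / 2) = 1 / 2 by field_simp] at this

theorem tendsto_arctan_log_div_nhdsGT_zero :
    Tendsto (fun t => π⁻¹ * arctan (Real.log (t / (1 - t)) / π)) (𝓝[>] 0) (𝓝 (-(1 / 2))) := by
  refine ((tendsto_arctan_log_div_nhdsLT_one.comp tendsto_one_sub_nhdsGT_zero).neg).congr
    fun t => ?_
  simp only [Function.comp, sub_sub_cancel]
  rw [show t / (1 - t) = ((1 - t) / t)⁻¹ from (inv_div _ _).symm, log_inv, neg_div, arctan_neg]
  ring

theorem intervalIntegrable_one_div_logMeanDenom :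
    IntervalIntegrable (fun t => 1 / logMeanDenom t) volume 0 1 :=
  intervalIntegrable_deriv_of_nonneg_of_tendsto one_pos (fun _ ht => hasDerivAt_arctan_log_div ht)
    (fun _ ht => (one_div_pos.2 (logMeanDenom_pos ht)).le)
    tendsto_arctan_log_div_nhdsGT_zero tendsto_arctan_log_div_nhdsLT_one

theorem integral_one_div_logMeanDenom : ∫ t in (0 : ℝ)..1, 1 / logMeanDenom t = 1 := by
  rw [intervalIntegral.integral_eq_sub_of_hasDerivAt_of_tendsto one_pos
    (fun _ ht => hasDerivAt_arctan_log_div ht) intervalIntegrable_one_div_logMeanDenom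
    tendsto_arctan_log_div_nhdsGT_zero tendsto_arctan_log_div_nhdsLT_one]
  norm_num

noncomputable def geomKernel (l t : ℝ) : ℝ := sin (π * l) / π * (t ^ (l - 1) * (1 - t) ^ (-l))

theorem geomKernel_eq {t : ℝ} (ht : t ∈ Ioo (0 : ℝ) 1) (l : ℝ) :
    geomKernel l t = (π * t)⁻¹ * (exp (Real.log (t / (1 - t)) * l) * sin (π * l)) := by
  have h₀ : 0 < t := ht.1
  have h₁ : 0 < 1 - t := sub_pos.2 ht.2
  have hexp : Real.log t * (l - 1) + Real.log (1 - t) * -l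
      = Real.log (t / (1 - t)) * l + -Real.log t := by
    rw [log_div h₀.ne' h₁.ne']
    ring
  rw [geomKernel, rpow_def_of_pos h₀, rpow_def_of_pos h₁, ← exp_add, hexp, exp_add, exp_neg,
    exp_log h₀]
  field_simp

theorem geomKernel_nonneg {l t : ℝ} (hl : l ∈ Icc (0 : ℝ) 1) (ht : t ∈ Icc (0 : ℝ) 1) :
    0 ≤ geomKernel l t := by
  have hsin : 0 ≤ sin (π * l) :=
    sin_nonneg_of_nonneg_of_le_pi (by nlinarith [pi_pos, hl.1]) (by nlinarith [pi_pos, hl.2])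
  have : 0 ≤ t ^ (l - 1) := rpow_nonneg ht.1 _
  have : 0 ≤ (1 - t) ^ (-l) := rpow_nonneg (sub_nonneg.2 ht.2) _
  unfold geomKernel
  positivity

theorem measurable_geomKernel : Measurable fun p : ℝ × ℝ => geomKernel p.1 p.2 := by
  unfold geomKernel
  fun_prop

theorem integral_geomKernel {t : ℝ} (ht : t ∈ Ioo (0 : ℝ) 1) :
    ∫ l in Ioo 0 1, geomKernel l t = 1 / logMeanDenom t := by
  have h₀ : 0 < t := ht.1
  have h₁ : 0 < 1 - t := sub_pos.2 ht.2
  rw [← integral_Ioc_eq_integral_Ioo, ← intervalIntegral.integral_of_le zero_le_one]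
  simp_rw [geomKernel_eq ht]
  rw [intervalIntegral.integral_const_mul, integral_exp_mul_mul_sin_pi_mul,
    exp_log (div_pos h₀ h₁), logMeanDenom]
  field_simp
  ring

theorem integrable_geomKernel_mul {h : ℝ → ℝ} {C : ℝ} (hc : ContinuousOn h (Ioo 0 1))
    (hC : ∀ t ∈ Ioo (0 : ℝ) 1, |h t| ≤ C) :
    Integrable (fun p : ℝ × ℝ => geomKernel p.1 p.2 * h p.2)
      ((volume.restrict (Ioo (0 : ℝ) 1)).prod (volume.restrict (Ioo 0 1))) := by
  set μ := volume.restrict (Ioo (0 : ℝ) 1)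
  have hm : AEStronglyMeasurable (fun p : ℝ × ℝ => geomKernel p.1 p.2 * h p.2) (μ.prod μ) :=
    measurable_geomKernel.aestronglyMeasurable.mul
      (hc.aestronglyMeasurable measurableSet_Ioo).comp_snd
  have hΨ : Integrable (fun t => 1 / logMeanDenom t) μ :=
    intervalIntegrable_one_div_logMeanDenom.1.mono_set Ioo_subset_Ioc_self
  have hnorm {t : ℝ} (ht : t ∈ Ioo (0 : ℝ) 1) :
      ∫ l, ‖geomKernel l t * h t‖ ∂μ = |h t| / logMeanDenom t := by
    have hpoint : ∀ l ∈ Ioo (0 : ℝ) 1, ‖geomKernel l t * h t‖ = geomKernel l t * |h t| :=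
      fun l hl => by
        rw [norm_mul, Real.norm_of_nonneg
          (geomKernel_nonneg (Ioo_subset_Icc_self hl) (Ioo_subset_Icc_self ht)), Real.norm_eq_abs]
    rw [setIntegral_congr_fun measurableSet_Ioo hpoint, integral_mul_const, integral_geomKernel ht]
    ring
  rw [integrable_prod_iff' hm]
  refine ⟨ae_restrict_of_forall_mem measurableSet_Ioo fun t ht => ?_, ?_⟩
  · have hcont : Continuous fun l => geomKernel l t * h t := by
      simp_rw [geomKernel_eq ht]
      fun_prop
    exact hcont.integrableOn_Icc.mono_set Ioo_subset_Icc_self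
  · refine (hΨ.const_mul C).mono' hm.norm.prod_swap.integral_prod_right' <|
      ae_restrict_of_forall_mem measurableSet_Ioo fun t ht => ?_
    have hD := logMeanDenom_pos ht
    rw [hnorm ht, Real.norm_of_nonneg (by positivity), mul_one_div]
    exact div_le_div_of_nonneg_right (hC t ht) hD.le

theorem integral_sin_mul_integral_rpow_mul {h : ℝ → ℝ} {C : ℝ} (hc : ContinuousOn h (Ioo 0 1))
    (hC : ∀ t ∈ Ioo (0 : ℝ) 1, |h t| ≤ C) :
    ∫ l in (0 : ℝ)..1, sin (π * l) / π * ∫ t in (0 : ℝ)..1, t ^ (l - 1) * (1 - t) ^ (-l) * h t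
      = ∫ t in (0 : ℝ)..1, h t / logMeanDenom t := by
  simp only [intervalIntegral.integral_of_le zero_le_one, integral_Ioc_eq_integral_Ioo,
    ← integral_const_mul]
  calc _ = ∫ l in Ioo 0 1, ∫ t in Ioo 0 1, geomKernel l t * h t := by
        simp only [geomKernel, mul_assoc]
    _ = ∫ t in Ioo 0 1, ∫ l in Ioo 0 1, geomKernel l t * h t :=
        integral_integral_swap (integrable_geomKernel_mul hc hC)
    _ = _ := setIntegral_congr_fun measurableSet_Ioo fun t ht => by
        rw [integral_mul_const, integral_geomKernel ht]
        ring

section funHarm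

variable {E : Type*} [NormedAddCommGroup E] [NormedSpace ℝ E]

def funHarmSet (f g : E → ℝ) (t : ℝ) (x : E) : Set ℝ :=
  { r : ℝ | ∃ φ : E →L[ℝ] ℝ, ∃ c₁ c₂ : ℝ,
    (∀ u : E, φ u - f u ≤ c₁) ∧ (∀ u : E, φ u - g u ≤ c₂) ∧
    r = φ x - (1 - t) * c₁ - t * c₂ }

def HasCommonAffineMinorant (f g : E → ℝ) : Prop :=
  ∃ φ₀ : E →L[ℝ] ℝ, ∃ c : ℝ, ∀ u : E, φ₀ u - c ≤ f u ∧ φ₀ u - c ≤ g u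

variable {f g : E → ℝ} {t : ℝ} {x : E}

theorem funHarmSet_subset_Iic (ht : t ∈ Icc (0 : ℝ) 1) :
    funHarmSet f g t x ⊆ Iic ((1 - t) * f x + t * g x) := by
  rintro _ ⟨φ, c₁, c₂, hf, hg, rfl⟩
  rw [mem_Iic]
  nlinarith [mul_le_mul_of_nonneg_left (hf x) (sub_nonneg.2 ht.2),
    mul_le_mul_of_nonneg_left (hg x) ht.1]

theorem sub_mem_funHarmSet {φ₀ : E →L[ℝ] ℝ} {c : ℝ}
    (hc : ∀ u : E, φ₀ u - c ≤ f u ∧ φ₀ u - c ≤ g u) : φ₀ x - c ∈ funHarmSet f g t x :=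
  ⟨φ₀, c, c, fun u => by linarith [(hc u).1], fun u => by linarith [(hc u).2], by ring⟩

theorem le_funHarm {r : ℝ} (ht : t ∈ Icc (0 : ℝ) 1) (hr : r ∈ funHarmSet f g t x) :
    r ≤ funHarm f g t x :=
  le_csSup ⟨_, funHarmSet_subset_Iic ht⟩ hr

theorem funHarm_le (ht : t ∈ Icc (0 : ℝ) 1) (hmin : HasCommonAffineMinorant f g) :
    funHarm f g t x ≤ (1 - t) * f x + t * g x := by
  obtain ⟨φ₀, c, hc⟩ := hmin
  exact csSup_le ⟨_, sub_mem_funHarmSet hc⟩ (funHarmSet_subset_Iic ht)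

theorem abs_funHarm_le (ht : t ∈ Icc (0 : ℝ) 1) {φ₀ : E →L[ℝ] ℝ} {c : ℝ}
    (hc : ∀ u : E, φ₀ u - c ≤ f u ∧ φ₀ u - c ≤ g u) :
    |funHarm f g t x| ≤ max |φ₀ x - c| |max (f x) (g x)| := by
  refine abs_le_max_abs_abs (le_funHarm ht (sub_mem_funHarmSet hc)) ?_
  have : 0 ≤ 1 - t := sub_nonneg.2 ht.2
  nlinarith [funHarm_le (x := x) ht ⟨φ₀, c, hc⟩, le_max_left (f x) (g x),
    le_max_right (f x) (g x), ht.1]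

theorem convexOn_funHarm_s14 (hmin : HasCommonAffineMinorant f g) :
    ConvexOn ℝ (Icc 0 1) fun t => funHarm f g t x := by
  refine ⟨convex_Icc 0 1, fun t₁ ht₁ t₂ ht₂ a b ha hb hab => ?_⟩
  obtain ⟨φ₀, c, hc⟩ := hmin
  refine csSup_le ⟨_, sub_mem_funHarmSet hc⟩ ?_
  rintro _ ⟨φ, c₁, c₂, hf, hg, rfl⟩
  have h₁ := le_funHarm (x := x) ht₁ ⟨φ, c₁, c₂, hf, hg, rfl⟩
  have h₂ := le_funHarm (x := x) ht₂ ⟨φ, c₁, c₂, hf, hg, rfl⟩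
  calc φ x - (1 - (a • t₁ + b • t₂)) * c₁ - (a • t₁ + b • t₂) * c₂
      = a * (φ x - (1 - t₁) * c₁ - t₁ * c₂) + b * (φ x - (1 - t₂) * c₁ - t₂ * c₂) := by
        simp only [smul_eq_mul]
        linear_combination (c₁ - φ x) * hab
    _ ≤ a • funHarm f g t₁ x + b • funHarm f g t₂ x := by
        simp only [smul_eq_mul]
        gcongr

theorem continuousOn_funHarm (hmin : HasCommonAffineMinorant f g) :
    ContinuousOn (fun t => funHarm f g t x) (Ioo 0 1) := by
  simpa only [interior_Icc] using (convexOn_funHarm_s14 hmin).continuousOn_interior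

end funHarm

theorem funLog_eq_integral_funHarm_general
    {E : Type*} [NormedAddCommGroup E] [NormedSpace ℝ E]
    (f g : E → ℝ)
    (hmin : ∃ φ₀ : E →L[ℝ] ℝ, ∃ c : ℝ, ∀ u : E, φ₀ u - c ≤ f u ∧ φ₀ u - c ≤ g u) :
    (∫ t in (0 : ℝ)..1, 1 / (t * (1 - t) * (π ^ 2 + Real.log (t / (1 - t)) ^ 2))) = 1 ∧
      ∀ x : E, funLog f g x =
        ∫ t in (0 : ℝ)..1,
          funHarm f g t x / (t * (1 - t) * (π ^ 2 + Real.log (t / (1 - t)) ^ 2)) := by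
  refine ⟨integral_one_div_logMeanDenom, fun x => ?_⟩
  obtain ⟨φ₀, c, hc⟩ := hmin
  exact integral_sin_mul_integral_rpow_mul (continuousOn_funHarm ⟨φ₀, c, hc⟩)
    fun t ht => abs_funHarm_le (Ioo_subset_Icc_self ht) hc

/-- The density `Ψ(t) = 1/(t(1−t)(π² + (log(t/(1−t)))²))` is a probability
density on `(0,1)`, and the logarithmic mean of convex functionals is the integral of the
weighted harmonic means against it. -/
theorem funLog_eq_integral_funHarm
    {E : Type*} [NormedAddCommGroup E] [NormedSpace ℝ E]
    (f g : E → ℝ)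
    (hf : ConvexOn ℝ Set.univ f) (hfc : Continuous f)
    (hg : ConvexOn ℝ Set.univ g) (hgc : Continuous g)
    (hmin : ∃ φ₀ : E →L[ℝ] ℝ, ∃ c : ℝ, ∀ u : E, φ₀ u - c ≤ f u ∧ φ₀ u - c ≤ g u) :
    (∫ t in (0 : ℝ)..1, 1 / (t * (1 - t) * (π ^ 2 + Real.log (t / (1 - t)) ^ 2))) = 1 ∧
      ∀ x : E, funLog f g x =
        ∫ t in (0 : ℝ)..1,
          funHarm f g t x / (t * (1 - t) * (π ^ 2 + Real.log (t / (1 - t)) ^ 2)) :=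
  funLog_eq_integral_funHarm_general f g hmin
end
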